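/- arXiv:1704.05491 — 2 statements merged into one kernel-verified Lean document; each statement's English description precedes it below -/
import Mathlib

section
/- Let P_1, …, P_N be discrete probability measures on ℝ^d and λ_1, …, λ_N > 0 with ∑_{i=1}^N λ_i = 1. Then the infimum of φ over all probability measures on ℝ^d with finite second moment is attained by some probability measure supported in the finite set S = {∑_{i=1}^N λ_i x_i : x_i ∈ supp(P_i)}; in particular, a barycenter exists and inf_{supp(P) ⊆ S} φ(P) = inf_P φ(P). -/
open MeasureTheory ENNReal

/-- Points of `ℝ^d`. -/
abbrev Pt (d : ℕ) := EuclideanSpace ℝ (Fin d)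

/-- The set of atoms (support points) of a measure. -/
def msupp {α : Type*} [MeasurableSpace α] (P : Measure α) : Set α := {x | P {x} ≠ 0}

/-- A measure is finitely supported (discrete) if its set of atoms is finite and
carries all the mass. -/
def FinitelySupported {α : Type*} [MeasurableSpace α] (P : Measure α) : Prop :=
  (msupp P).Finite ∧ P (msupp P)ᶜ = 0

/-- Finite second moment. -/
def FiniteSecondMoment {d : ℕ} (P : Measure (Pt d)) : Prop :=
  ∫⁻ x, ENNReal.ofReal (‖x‖ ^ 2) ∂P < ⊤

/-- The squared 2-Wasserstein distance: the infimum of `∫ ‖x - y‖² dπ` over all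
couplings `π` of `P` and `Q`. -/
noncomputable def W2sq {d : ℕ} (P Q : Measure (Pt d)) : ℝ≥0∞ :=
  ⨅ π ∈ {π : Measure (Pt d × Pt d) | π.map Prod.fst = P ∧ π.map Prod.snd = Q},
    ∫⁻ p, ENNReal.ofReal (‖p.1 - p.2‖ ^ 2) ∂π

/-- The barycenter objective `φ(P) = ∑ i, λ i * W₂(P, P i)²`. -/
noncomputable def phi {d N : ℕ} (l : Fin N → ℝ) (Pm : Fin N → Measure (Pt d))
    (P : Measure (Pt d)) : ℝ≥0∞ :=
  ∑ i, ENNReal.ofReal (l i) * W2sq P (Pm i)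

/-- A (Wasserstein) barycenter: a probability measure with finite second moment
minimizing `φ` among all such measures. -/
def IsBarycenter {d N : ℕ} (l : Fin N → ℝ) (Pm : Fin N → Measure (Pt d))
    (P : Measure (Pt d)) : Prop :=
  IsProbabilityMeasure P ∧ FiniteSecondMoment P ∧
    ∀ Q : Measure (Pt d), IsProbabilityMeasure Q → FiniteSecondMoment Q →
      phi l Pm P ≤ phi l Pm Q

/-- The set `S` of weighted centroids of combinations of support points,
one from each measure. -/
def centroidSet {d N : ℕ} (l : Fin N → ℝ) (Pm : Fin N → Measure (Pt d)) : Set (Pt d) :=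
  {y | ∃ x : Fin N → Pt d, (∀ i, x i ∈ msupp (Pm i)) ∧ y = ∑ i, l i • x i}

/-- The union `S_org` of the supports of the measures. -/
def origSupport {d N : ℕ} (Pm : Fin N → Measure (Pt d)) : Set (Pt d) :=
  ⋃ i, msupp (Pm i)

/-!
Let `t i` be the finite support of `P_i` and `T y = ∑ λ_i y_i` the centroid map on
`∏ i, t i`. For a multi-coupling `ν` of the `P_i` on `∏ i, t i`, the couplings `(T, y_i)_# ν`
give `φ(T_# ν) ≤ ∫ c dν` with `c y = ∑ λ_i ‖T y - y_i‖²`. Conversely, given any `Q` and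
couplings `π_i = Q ⊗ κ_i` of `Q` and `P_i`, drawing `x ∼ Q` and then the `y_i ∼ κ_i(x)`
independently glues them into a multi-coupling `ν` with `∫ c dν ≤ ∑ λ_i ∫ ‖x - y‖² dπ_i`,
since the centroid minimises `x ↦ ∑ λ_i ‖x - y_i‖²`. So `φ(Q) ≥ ∫ c dν` for every `Q` and
every `ν` minimising the linear functional `ν ↦ ∫ c dν` over the compact set of
multi-couplings, and `T_# ν` is a barycenter supported in `S = T(∏ i, t i)`.
-/

open ProbabilityTheory

section FiniteSpace

variable {Ω : Type*} [MeasurableSpace Ω] [MeasurableSingletonClass Ω]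

lemma continuous_lintegral_sum_smul_dirac [Fintype Ω] {c : Ω → ℝ≥0∞} (hc : ∀ y, c y ≠ ⊤) :
    Continuous fun w : Ω → ℝ≥0∞ => ∫⁻ y, c y ∂(Measure.sum fun y => w y • Measure.dirac y) := by
  simp only [lintegral_sum_measure, lintegral_smul_measure, lintegral_dirac, tsum_fintype,
    smul_eq_mul]
  exact continuous_finsetSum _ fun y _ =>
    (ENNReal.continuous_mul_const (hc y)).comp (continuous_apply y)

lemma measurable_measure_of_measurable_singleton [Countable Ω] {X : Type*}
    [MeasurableSpace X] {K : X → Measure Ω} (hK : ∀ y, Measurable fun x => K x {y}) :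
    Measurable K := by
  refine Measure.measurable_of_measurable_coe _ fun s hs => ?_
  simp_rw [← Measure.tsum_indicator_apply_singleton _ s hs]
  refine Measurable.tsum fun y => ?_
  by_cases hy : y ∈ s <;> simp [hy, hK y]

end FiniteSpace

lemma isProbabilityMeasure_comap_subtype_val {Y : Type*} [MeasurableSpace Y] {μ : Measure Y}
    [IsProbabilityMeasure μ] {s : Set Y} (hs : MeasurableSet s) (h : μ sᶜ = 0) :
    IsProbabilityMeasure (μ.comap (Subtype.val : s → Y)) := by
  constructor
  rw [comap_subtype_coe_apply hs, Set.image_univ, Subtype.range_coe,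
    ← prob_compl_eq_zero_iff hs, h]

section MultiCoupling

variable {ι Y : Type*} [MeasurableSpace Y]

def IsMultiCoupling {t : ι → Finset Y} (μ : ι → Measure Y) (ν : Measure ((i : ι) → t i)) :
    Prop :=
  ∀ i, ν.map (fun y => (y i : Y)) = μ i

lemma IsMultiCoupling.isProbabilityMeasure [Nonempty ι] {t : ι → Finset Y}
    {μ : ι → Measure Y} [∀ i, IsProbabilityMeasure (μ i)] {ν : Measure ((i : ι) → t i)}
    (hν : IsMultiCoupling μ ν) : IsProbabilityMeasure ν := by
  let i : ι := Classical.arbitrary ι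
  have : IsProbabilityMeasure (ν.map fun y => (y i : Y)) := hν i ▸ inferInstance
  exact Measure.isProbabilityMeasure_of_map fun y => (y i : Y)

variable [Fintype ι] [MeasurableSingletonClass Y] {t : ι → Finset Y} {μ : ι → Measure Y}

noncomputable def indepCoupling (t : ι → Finset Y) (m : ι → Measure Y) :
    Measure ((i : ι) → t i) :=
  Measure.pi fun i => (m i).comap Subtype.val

lemma isMultiCoupling_indepCoupling {m : ι → Measure Y} [∀ i, IsProbabilityMeasure (m i)]
    (ht : ∀ i, m i (↑(t i))ᶜ = 0) : IsMultiCoupling m (indepCoupling t m) := by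
  classical
  intro i
  have := fun j => isProbabilityMeasure_comap_subtype_val (t j).measurableSet (ht j)
  change Measure.map (((↑) : t i → Y) ∘ fun y : (j : ι) → t j => y i) _ = _
  rw [indepCoupling, ← Measure.map_map measurable_subtype_coe (measurable_pi_apply i),
    (measurePreserving_eval _ i).map_eq]
  exact (map_comap_subtype_coe (t i).measurableSet (m i)).trans
    (Measure.restrict_eq_self_of_ae_mem (ht i))

lemma measurable_indepCoupling {X : Type*} [MeasurableSpace X] (κ : ι → Kernel X Y)
    [∀ i, IsFiniteKernel (κ i)] : Measurable fun x => indepCoupling t fun i => κ i x := by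
  classical
  refine measurable_measure_of_measurable_singleton fun y => ?_
  simp only [indepCoupling, Measure.pi_singleton,
    comap_subtype_coe_apply (t _).measurableSet, Set.image_singleton]
  exact Finset.measurable_prod _ fun i _ => Kernel.measurable_coe _ (measurableSet_singleton _)

lemma IsMultiCoupling.lintegral_sum_comp_eval {ν : Measure ((i : ι) → t i)}
    (hν : IsMultiCoupling μ ν) {g : ι → Y → ℝ≥0∞} (hg : ∀ i, Measurable (g i)) :
    ∫⁻ y, ∑ i, g i (y i) ∂ν = ∑ i, ∫⁻ z, g i z ∂μ i := by
  rw [lintegral_finsetSum _ fun i _ => measurable_of_countable _]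
  refine Finset.sum_congr rfl fun i _ => ?_
  rw [← hν i, lintegral_map (hg i) (measurable_of_countable _)]

lemma isClosed_setOf_isMultiCoupling (μ : ι → Measure Y) :
    IsClosed {w : ((i : ι) → t i) → ℝ≥0∞ |
      IsMultiCoupling μ (Measure.sum fun y => w y • Measure.dirac y)} := by
  classical
  have hcont : ∀ i s, MeasurableSet s → Continuous fun w : ((i : ι) → t i) → ℝ≥0∞ =>
      (Measure.sum fun y => w y • Measure.dirac y).map (fun y => (y i : Y)) s := by
    intro i s hs
    simp_rw [Measure.map_apply (measurable_of_countable _) hs,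
      ← lintegral_indicator_one MeasurableSet.of_discrete]
    refine continuous_lintegral_sum_smul_dirac fun y => ?_
    by_cases hy : y ∈ (fun y => (y i : Y)) ⁻¹' s <;> simp [hy]
  simp only [IsMultiCoupling, Measure.ext_iff, Set.ofPred_forall]
  exact isClosed_iInter fun i => isClosed_iInter fun s => isClosed_iInter fun hs =>
    isClosed_eq (hcont i s hs) continuous_const

lemma exists_isMultiCoupling_isMinOn_lintegral (hne : ∃ ν, IsMultiCoupling (t := t) μ ν)
    {c : ((i : ι) → t i) → ℝ≥0∞} (hc : ∀ y, c y ≠ ⊤) :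
    ∃ ν, IsMultiCoupling μ ν ∧
      ∀ ν', IsMultiCoupling μ ν' → ∫⁻ y, c y ∂ν ≤ ∫⁻ y, c y ∂ν' := by
  classical
  -- a measure on the finite type `∏ i, t i` is determined by its weights `ν {y}`
  have weights_mem : ∀ ν : Measure ((i : ι) → t i), IsMultiCoupling μ ν →
      (fun y => ν {y}) ∈ {w | IsMultiCoupling μ (Measure.sum fun y => w y • Measure.dirac y)} :=
    fun ν hν => by rw [Set.mem_ofPred_eq, Measure.sum_smul_dirac ν]; exact hν
  obtain ⟨ν₀, hν₀⟩ := hne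
  obtain ⟨w, hw, hmin⟩ := (isClosed_setOf_isMultiCoupling μ).isCompact.exists_isMinOn
    ⟨_, weights_mem ν₀ hν₀⟩ (continuous_lintegral_sum_smul_dirac hc).continuousOn
  refine ⟨_, hw, fun ν hν => ?_⟩
  have := isMinOn_iff.mp hmin _ (weights_mem ν hν)
  rwa [Measure.sum_smul_dirac ν] at this

lemma exists_isMultiCoupling_lintegral_iInf_le {X : Type*} [MeasurableSpace X]
    (Q : Measure X) [SFinite Q] (κ : ι → Kernel X Y) [∀ i, IsMarkovKernel (κ i)]
    (hκ : ∀ i, κ i ∘ₘ Q = μ i) (ht : ∀ i, μ i (↑(t i))ᶜ = 0)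
    {f : ι → X × Y → ℝ≥0∞} (hf : ∀ i, Measurable (f i)) :
    ∃ ν : Measure ((i : ι) → t i), IsMultiCoupling μ ν ∧
      ∫⁻ y, ⨅ x, ∑ i, f i (x, y i) ∂ν ≤ ∑ i, ∫⁻ p, f i p ∂(Q ⊗ₘ κ i) := by
  -- `ν` draws `x ∼ Q`, then the `y i ∼ κ i x` independently
  let K : Kernel X ((i : ι) → t i) := ⟨_, measurable_indepCoupling (t := t) κ⟩
  have hsupp : ∀ᵐ x ∂Q, ∀ i, κ i x (↑(t i))ᶜ = 0 := by
    refine ae_all_iff.mpr fun i => ?_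
    have hA : MeasurableSet (↑(t i) : Set Y)ᶜ := (t i).measurableSet.compl
    have h0 : ∫⁻ x, κ i x (↑(t i))ᶜ ∂Q = 0 := by
      rw [← Measure.bind_apply hA (κ i).aemeasurable, hκ i, ht i]
    exact (lintegral_eq_zero_iff (Kernel.measurable_coe _ hA)).mp h0
  have hK : ∀ᵐ x ∂Q, IsMultiCoupling (fun i => κ i x) (K x) :=
    hsupp.mono fun x hx => isMultiCoupling_indepCoupling hx
  refine ⟨K ∘ₘ Q, fun i => ?_, ?_⟩
  · rw [Measure.map_comp _ _ (measurable_of_countable _), ← hκ i]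
    refine Measure.bind_congr_right (hK.mono fun x hx => ?_)
    rw [Kernel.map_apply _ (measurable_of_countable _)]
    exact hx i
  · calc ∫⁻ y, ⨅ x, ∑ i, f i (x, y i) ∂(K ∘ₘ Q)
        = ∫⁻ x, ∫⁻ y, ⨅ x', ∑ i, f i (x', y i) ∂K x ∂Q :=
          Measure.lintegral_bind K.aemeasurable (measurable_of_countable _).aemeasurable
      _ ≤ ∫⁻ x, ∑ i, ∫⁻ z, f i (x, z) ∂κ i x ∂Q := by
          refine lintegral_mono_ae (hK.mono fun x hx => ?_)
          calc ∫⁻ y, ⨅ x', ∑ i, f i (x', y i) ∂K x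
              ≤ ∫⁻ y, ∑ i, f i (x, y i) ∂K x := lintegral_mono fun y => iInf_le _ x
            _ = ∑ i, ∫⁻ z, f i (x, z) ∂κ i x :=
                hx.lintegral_sum_comp_eval fun i => (hf i).comp measurable_prodMk_left
      _ = ∑ i, ∫⁻ p, f i p ∂(Q ⊗ₘ κ i) := by
          rw [lintegral_finsetSum _ fun i _ => (hf i).lintegral_kernel_prod_right']
          simp_rw [Measure.lintegral_compProd (hf _)]

end MultiCoupling

section Centroid

variable {ι E : Type*} [Fintype ι] [NormedAddCommGroup E] [InnerProductSpace ℝ E]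

noncomputable def weightedSqDist (l : ι → ℝ) (x : E) (y : ι → E) : ℝ≥0∞ :=
  ∑ i, ENNReal.ofReal (l i) * ENNReal.ofReal (‖x - y i‖ ^ 2)

lemma sum_mul_norm_sub_sq_eq {l : ι → ℝ} (hl : ∑ i, l i = 1) (y : ι → E) (x : E) :
    ∑ i, l i * ‖x - y i‖ ^ 2
      = ∑ i, l i * ‖(∑ j, l j • y j) - y i‖ ^ 2 + ‖x - ∑ j, l j • y j‖ ^ 2 := by
  set B := ∑ j, l j • y j
  have hB : ∑ i, l i • (B - y i) = 0 := by
    simp only [smul_sub, Finset.sum_sub_distrib, ← Finset.sum_smul, hl, one_smul, B, sub_self]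
  have hsplit : ∀ i,
      ‖x - y i‖ ^ 2 = ‖x - B‖ ^ 2 + 2 * inner ℝ (x - B) (B - y i) + ‖B - y i‖ ^ 2 :=
    fun i => by rw [← norm_add_sq_real, sub_add_sub_cancel]
  have hinner : ∑ i, l i * inner ℝ (x - B) (B - y i) = 0 := by
    simp only [← real_inner_smul_right, ← inner_sum, hB, inner_zero_right]
  simp only [hsplit, mul_add, Finset.sum_add_distrib, ← Finset.sum_mul, hl,
    mul_left_comm (l _) 2, ← Finset.mul_sum, hinner]
  ring

lemma weightedSqDist_centroid_le {l : ι → ℝ} (hl₀ : ∀ i, 0 ≤ l i) (hl : ∑ i, l i = 1)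
    (y : ι → E) (x : E) : weightedSqDist l (∑ j, l j • y j) y ≤ weightedSqDist l x y := by
  have hreal : ∀ z : E, weightedSqDist l z y = ENNReal.ofReal (∑ i, l i * ‖z - y i‖ ^ 2) := by
    intro z
    rw [weightedSqDist, ENNReal.ofReal_sum_of_nonneg fun i _ => mul_nonneg (hl₀ i) (sq_nonneg _)]
    simp only [ENNReal.ofReal_mul (hl₀ _)]
  rw [hreal, hreal, sum_mul_norm_sub_sq_eq hl y x]
  exact ENNReal.ofReal_le_ofReal (le_add_of_nonneg_right (sq_nonneg _))

end Centroid

section Barycenter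

variable {d N : ℕ} {l : Fin N → ℝ} {Pm : Fin N → Measure (Pt d)}

lemma measurable_ofReal_norm_sub_sq :
    Measurable fun p : Pt d × Pt d => ENNReal.ofReal (‖p.1 - p.2‖ ^ 2) := by
  fun_prop

lemma W2sq_map_le {Ω : Type*} [MeasurableSpace Ω] (ν : Measure Ω) {f g : Ω → Pt d}
    (hf : Measurable f) (hg : Measurable g) :
    W2sq (ν.map f) (ν.map g) ≤ ∫⁻ ω, ENNReal.ofReal (‖f ω - g ω‖ ^ 2) ∂ν := by
  have hfg : Measurable fun ω => (f ω, g ω) := hf.prodMk hg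
  calc W2sq (ν.map f) (ν.map g)
      ≤ ∫⁻ p, ENNReal.ofReal (‖p.1 - p.2‖ ^ 2) ∂(ν.map fun ω => (f ω, g ω)) :=
        iInf₂_le _ ⟨by rw [Measure.map_map measurable_fst hfg]; rfl,
          by rw [Measure.map_map measurable_snd hfg]; rfl⟩
    _ = ∫⁻ ω, ENNReal.ofReal (‖f ω - g ω‖ ^ 2) ∂ν :=
        lintegral_map measurable_ofReal_norm_sub_sq hfg

lemma phi_map_le {t : Fin N → Finset (Pt d)} {ν : Measure ((i : Fin N) → t i)}
    (hν : IsMultiCoupling Pm ν) (T : ((i : Fin N) → t i) → Pt d) :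
    phi l Pm (ν.map T) ≤ ∫⁻ y, weightedSqDist l (T y) (fun i => y i) ∂ν := by
  simp only [weightedSqDist]
  rw [lintegral_finsetSum _ fun i _ => measurable_of_countable _]
  refine Finset.sum_le_sum fun i _ => ?_
  rw [lintegral_const_mul _ (measurable_of_countable _), ← hν i]
  gcongr
  exact W2sq_map_le ν (measurable_of_countable _) (measurable_of_countable _)

lemma le_phi_of_forall_couplings (hl : ∀ i, 0 < l i) (hsum : ∑ i, l i = 1)
    {Q : Measure (Pt d)} {L : ℝ≥0∞}
    (H : ∀ π : Fin N → Measure (Pt d × Pt d),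
      (∀ i, (π i).map Prod.fst = Q ∧ (π i).map Prod.snd = Pm i) →
        L ≤ ∑ i, ENNReal.ofReal (l i) * ∫⁻ p, ENNReal.ofReal (‖p.1 - p.2‖ ^ 2) ∂π i) :
    L ≤ phi l Pm Q := by
  refine ENNReal.le_of_forall_pos_le_add fun ε hε hφ => ?_
  have hW : ∀ i, W2sq Q (Pm i) < W2sq Q (Pm i) + ε := by
    intro i
    have hi : ENNReal.ofReal (l i) * W2sq Q (Pm i) < ⊤ :=
      (Finset.single_le_sum (f := fun i => ENNReal.ofReal (l i) * W2sq Q (Pm i))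
        (fun _ _ => zero_le) (Finset.mem_univ i)).trans_lt hφ
    exact ENNReal.lt_add_right (ENNReal.lt_top_of_mul_ne_top_right hi.ne
      (ENNReal.ofReal_pos.mpr (hl i)).ne').ne (by exact_mod_cast hε.ne')
  choose π hπ hcost using fun i => by simpa only [W2sq, iInf_lt_iff, exists_prop] using hW i
  calc L ≤ ∑ i, ENNReal.ofReal (l i) * ∫⁻ p, ENNReal.ofReal (‖p.1 - p.2‖ ^ 2) ∂π i := H π hπ
    _ ≤ ∑ i, ENNReal.ofReal (l i) * (W2sq Q (Pm i) + ε) := by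
        gcongr with i
        exact (hcost i).le
    _ = phi l Pm Q + ε := by
        simp only [mul_add, Finset.sum_add_distrib, ← Finset.sum_mul,
          ← ENNReal.ofReal_sum_of_nonneg fun i _ => (hl i).le, hsum, ENNReal.ofReal_one, one_mul]
        rfl

lemma le_phi_of_forall_isMultiCoupling_le (hl : ∀ i, 0 < l i) (hsum : ∑ i, l i = 1)
    {t : Fin N → Finset (Pt d)} (ht : ∀ i, Pm i (↑(t i))ᶜ = 0) {L : ℝ≥0∞}
    (hL : ∀ ν : Measure ((i : Fin N) → t i), IsMultiCoupling Pm ν →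
      L ≤ ∫⁻ y, weightedSqDist l (∑ j, l j • (y j : Pt d)) (fun i => y i) ∂ν)
    (Q : Measure (Pt d)) [IsProbabilityMeasure Q] : L ≤ phi l Pm Q := by
  refine le_phi_of_forall_couplings hl hsum fun π hπ => ?_
  have : ∀ i, IsProbabilityMeasure (π i) := fun i => by
    have : IsProbabilityMeasure ((π i).map Prod.fst) := (hπ i).1 ▸ inferInstance
    exact Measure.isProbabilityMeasure_of_map Prod.fst
  have hdis : ∀ i, Q ⊗ₘ (π i).condKernel = π i := fun i => by
    rw [← (hπ i).1]
    exact (π i).disintegrate _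
  have hκ : ∀ i, (π i).condKernel ∘ₘ Q = Pm i := fun i => by
    rw [← Measure.snd_compProd, hdis i]
    exact (hπ i).2
  let f : Fin N → Pt d × Pt d → ℝ≥0∞ := fun i p =>
    ENNReal.ofReal (l i) * ENNReal.ofReal (‖p.1 - p.2‖ ^ 2)
  obtain ⟨ν, hν, hcost⟩ := exists_isMultiCoupling_lintegral_iInf_le Q
    (fun i => (π i).condKernel) hκ ht (f := f) fun i => measurable_ofReal_norm_sub_sq.const_mul _
  calc L ≤ ∫⁻ y, weightedSqDist l (∑ j, l j • (y j : Pt d)) (fun i => y i) ∂ν := hL ν hν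
    _ ≤ ∫⁻ y, ⨅ x, ∑ i, f i (x, y i) ∂ν := lintegral_mono fun y => le_iInf fun x =>
        weightedSqDist_centroid_le (fun i => (hl i).le) hsum _ x
    _ ≤ ∑ i, ∫⁻ p, f i p ∂(Q ⊗ₘ (π i).condKernel) := hcost
    _ = ∑ i, ENNReal.ofReal (l i) * ∫⁻ p, ENNReal.ofReal (‖p.1 - p.2‖ ^ 2) ∂π i := by
        simp only [hdis, f, lintegral_const_mul _ measurable_ofReal_norm_sub_sq]

lemma exists_minimizer_supported_in_centroidSet (hl : ∀ i, 0 < l i) (hsum : ∑ i, l i = 1)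
    (hprob : ∀ i, IsProbabilityMeasure (Pm i)) (hfin : ∀ i, FinitelySupported (Pm i)) :
    ∃ P : Measure (Pt d), IsProbabilityMeasure P ∧ P (centroidSet l Pm)ᶜ = 0 ∧
      ∀ Q : Measure (Pt d), IsProbabilityMeasure Q → phi l Pm P ≤ phi l Pm Q := by
  classical
  have : NeZero N := ⟨by rintro rfl; simp at hsum⟩
  let t : Fin N → Finset (Pt d) := fun i => (hfin i).1.toFinset
  have ht : ∀ i, Pm i (↑(t i))ᶜ = 0 := fun i => by simpa [t] using (hfin i).2
  let T : ((i : Fin N) → t i) → Pt d := fun y => ∑ i, l i • (y i : Pt d)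
  obtain ⟨ν, hν, hmin⟩ := exists_isMultiCoupling_isMinOn_lintegral
    ⟨_, isMultiCoupling_indepCoupling ht⟩ (c := fun y => weightedSqDist l (T y) fun i => y i)
    fun y => by simp [weightedSqDist, ENNReal.mul_ne_top]
  have := hν.isProbabilityMeasure
  refine ⟨ν.map T, Measure.isProbabilityMeasure_map (measurable_of_countable T).aemeasurable, ?_,
    fun Q _ => (phi_map_le hν T).trans (le_phi_of_forall_isMultiCoupling_le hl hsum ht hmin Q)⟩
  have hrange : Set.range T ⊆ centroidSet l Pm := by
    rintro _ ⟨y, rfl⟩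
    exact ⟨fun i => y i, fun i => (hfin i).1.mem_toFinset.mp (y i).2, rfl⟩
  exact measure_mono_null (Set.compl_subset_compl.mpr hrange)
    (ae_map_mem_range T (Set.finite_range T).measurableSet ν)

lemma finite_centroidSet (hfin : ∀ i, (msupp (Pm i)).Finite) : (centroidSet l Pm).Finite := by
  refine ((Set.Finite.pi hfin).image fun x => ∑ i, l i • x i).subset ?_
  rintro _ ⟨x, hx, rfl⟩
  exact ⟨x, fun i _ => hx i, rfl⟩

end Barycenter

lemma finiteSecondMoment_of_measure_compl_eq_zero {d : ℕ} {P : Measure (Pt d)}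
    [IsFiniteMeasure P] {S : Set (Pt d)} (hS : S.Finite) (h : P Sᶜ = 0) :
    FiniteSecondMoment P := by
  have hP : P.restrict ↑hS.toFinset = P :=
    Measure.restrict_eq_self_of_ae_mem (by rw [Set.Finite.coe_toFinset]; exact h)
  rw [FiniteSecondMoment, ← hP, lintegral_finset]
  exact ENNReal.sum_lt_top.mpr fun x _ =>
    ENNReal.mul_lt_top ENNReal.ofReal_lt_top (measure_lt_top P _)

/-- the infimum of φ is attained by a measure supported in the
finite set S of weighted centroids; in particular a barycenter exists and the
infimum over measures supported in S equals the infimum over all measures. -/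
theorem barycenter_exists_supported_in_centroidSet {d N : ℕ}
    (l : Fin N → ℝ) (Pm : Fin N → Measure (Pt d))
    (hl : ∀ i, 0 < l i) (hsum : ∑ i, l i = 1)
    (hprob : ∀ i, IsProbabilityMeasure (Pm i))
    (hfin : ∀ i, FinitelySupported (Pm i)) :
    (∃ P : Measure (Pt d), IsProbabilityMeasure P ∧ P (centroidSet l Pm)ᶜ = 0 ∧
        ∀ Q : Measure (Pt d), IsProbabilityMeasure Q → FiniteSecondMoment Q →
          phi l Pm P ≤ phi l Pm Q) ∧
      (⨅ P ∈ {P : Measure (Pt d) | IsProbabilityMeasure P ∧ P (centroidSet l Pm)ᶜ = 0},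
          phi l Pm P) =
        ⨅ P ∈ {P : Measure (Pt d) | IsProbabilityMeasure P ∧ FiniteSecondMoment P},
          phi l Pm P := by
  obtain ⟨P, hP, hPS, hmin⟩ := exists_minimizer_supported_in_centroidSet hl hsum hprob hfin
  have hS := finite_centroidSet (l := l) fun i => (hfin i).1
  refine ⟨⟨P, hP, hPS, fun Q hQ _ => hmin Q hQ⟩, le_antisymm ?_ ?_⟩
  · exact le_iInf₂ fun Q hQ => (iInf₂_le P ⟨hP, hPS⟩).trans (hmin Q hQ.1)
  · exact le_iInf₂ fun P' ⟨hP', hP'S⟩ =>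
      iInf₂_le P' ⟨hP', finiteSecondMoment_of_measure_compl_eq_zero hS hP'S⟩
end

section
/- Let P_1, …, P_N be discrete probability measures on ℝ^d, let λ_1, …, λ_N > 0 with ∑_{i=1}^N λ_i = 1, and let S_0 be a nonempty finite subset of ℝ^d. Then among all probability measures supported in S_0 there exists one, P̄_0, that minimizes φ over all probability measures supported in S_0 and whose support satisfies |P̄_0| ≤ ∑_{i=1}^N |P_i| − N + 1. -/
open MeasureTheory ENNReal

/-!
Restricted to measures carried by `S₀`, minimising `φ` is the finite multi-marginal linear
program: minimise `∑ γ(y, x) ∑ᵢ λᵢ ‖y - xᵢ‖²` over probability vectors `γ` on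
`S₀ × ∏ᵢ supp Pᵢ` whose `i`-th marginal is `Pᵢ`. Projecting `γ` to the pairs `(y, xᵢ)` couples
its first marginal `P` with each `Pᵢ`, so `φ(P) ≤ cost γ`; conversely, gluing `ε`-optimal couplings
of any `Q` with the `Pᵢ` along `Q` gives a feasible `γ` of cost at most `φ(Q) + ε`. Hence the first
marginal of an optimal `γ` minimises `φ` over measures carried by `S₀`.

The feasible set is a compact polytope, so some optimal `γ` is an extreme point of it (an extreme
point of the optimal face). The columns of the constraint matrix on the support of an extreme point
are linearly independent, and only `∑ᵢ |Pᵢ| - N + 1` of the marginal constraints are independent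
(each marginal has mass one), which bounds the number of atoms of `γ`, hence of `P`.
-/

open Finset Filter Topology

section Extreme

variable {E : Type*} [AddCommGroup E] [Module ℝ E] [TopologicalSpace E] [T2Space E]
  [IsTopologicalAddGroup E] [ContinuousSMul ℝ E] [LocallyConvexSpace ℝ E]

theorem IsCompact.exists_mem_extremePoints_isMaxOn {A : Set E} (hA : IsCompact A)
    (hne : A.Nonempty) (l : StrongDual ℝ E) : ∃ x ∈ A.extremePoints ℝ, IsMaxOn l A x := by
  have hexp : IsExposed ℝ A (l.toExposed A) := ContinuousLinearMap.toExposed.isExposed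
  obtain ⟨x₀, hx₀, hmax⟩ := hA.exists_isMaxOn hne l.continuous.continuousOn
  obtain ⟨x, hx⟩ := (hexp.isCompact hA).extremePoints_nonempty ⟨x₀, hx₀, hmax⟩
  exact ⟨x, hexp.isExtreme.extremePoints_subset_extremePoints hx, (extremePoints_subset hx).2⟩

end Extreme

section LinearProgram

variable {ι G : Type*} [Fintype ι] {A : G → ι → ℝ} {b : G → ℝ} {γ : ι → ℝ}

def feasibleSet (A : G → ι → ℝ) (b : G → ℝ) : Set (ι → ℝ) :=
  {γ | 0 ≤ γ ∧ ∀ g, ∑ e, A g e * γ e = b g}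

theorem isClosed_feasibleSet : IsClosed (feasibleSet A b) := by
  simp only [feasibleSet, Set.ofPred_and, Set.ofPred_forall]
  refine (isClosed_le continuous_const continuous_id).inter (isClosed_iInter fun g => ?_)
  exact isClosed_eq (continuous_finsetSum _ fun e _ => continuous_const.mul (continuous_apply e))
    continuous_const

theorem add_smul_mem_feasibleSet {v : ι → ℝ} (hγ : γ ∈ feasibleSet A b)
    (hv : ∀ g, ∑ e, A g e * v e = 0) (c : ℝ) (hpos : 0 ≤ γ + c • v) :
    γ + c • v ∈ feasibleSet A b := by
  refine ⟨hpos, fun g => ?_⟩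
  simp only [Pi.add_apply, Pi.smul_apply, smul_eq_mul, mul_add, sum_add_distrib, hγ.2 g,
    mul_left_comm _ c, ← mul_sum, hv g, mul_zero, add_zero]

theorem eventually_nonneg_add_smul {v : ι → ℝ} (hγ : 0 ≤ γ) (hv : ∀ e, γ e = 0 → v e = 0) :
    ∀ᶠ c in 𝓝 (0 : ℝ), 0 ≤ γ + c • v := by
  refine eventually_all.2 fun e => ?_
  obtain he | he := (hγ e).eq_or_lt
  · simp [← he, hv e he.symm]
  · have hcont : Continuous fun c : ℝ => γ e + c * v e := by fun_prop
    have := hcont.tendsto 0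
    rw [zero_mul, add_zero] at this
    exact (this.eventually (eventually_gt_nhds he)).mono fun c hc => hc.le

theorem card_support_le_of_mem_extremePoints [Fintype G]
    (hγ : γ ∈ (feasibleSet A b).extremePoints ℝ) : #{e | γ e ≠ 0} ≤ Fintype.card G := by
  classical
  suffices LinearIndependent ℝ (fun e : {e // γ e ≠ 0} => fun g => A g e) by
    simpa [Fintype.card_subtype, Module.finrank_fintype_fun_eq_card] using
      this.fintype_card_le_finrank
  rw [Fintype.linearIndependent_iff]
  intro u hu
  set v : ι → ℝ := fun e => if h : γ e ≠ 0 then u ⟨e, h⟩ else 0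
  have hvanish (e : ι) (he : γ e = 0) : v e = 0 := by simp [v, he]
  have hker (g : G) : ∑ e, A g e * v e = 0 := by
    have hoff (e : {e // ¬γ e ≠ 0}) : A g e * v e = 0 := by simp [v, e.2]
    have hon (e : {e // γ e ≠ 0}) : A g e * v e = u e * A g e := by simp [v, e.2, mul_comm]
    rw [← Fintype.sum_subtype_add_sum_subtype (fun e => γ e ≠ 0), Fintype.sum_congr _ _ hoff,
      Fintype.sum_congr _ _ hon]
    simpa using congrFun hu g
  -- `γ ± ε v` stay feasible for small `ε > 0`, and `γ` is their midpoint.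
  obtain ⟨ε, ⟨hplus, hminus⟩, hε⟩ := (((eventually_nonneg_add_smul hγ.1.1 hvanish).and
    (eventually_nonneg_add_smul (v := -v) hγ.1.1 fun e he => by simp [hvanish e he])).filter_mono
    nhdsWithin_le_nhds).and (self_mem_nhdsWithin (s := Set.Ioi 0)) |>.exists
  rw [smul_neg, ← neg_smul] at hminus
  have hseg : γ ∈ openSegment ℝ (γ + ε • v) (γ + (-ε) • v) :=
    ⟨1 / 2, 1 / 2, by norm_num, by norm_num, by norm_num, by ext; simp; ring⟩
  have hεv := hγ.2 (add_smul_mem_feasibleSet hγ.1 hker ε hplus)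
    (add_smul_mem_feasibleSet hγ.1 hker (-ε) hminus) hseg
  intro e
  simpa [v, e.2, hε.ne'] using congrFun hεv e

theorem exists_sparse_isMinOn_feasibleSet [Fintype G] (hne : (feasibleSet A b).Nonempty)
    (hbdd : Bornology.IsBounded (feasibleSet A b)) (c : ι → ℝ) :
    ∃ γ ∈ feasibleSet A b, IsMinOn (fun γ => ∑ e, c e * γ e) (feasibleSet A b) γ ∧
      #{e | γ e ≠ 0} ≤ Fintype.card G := by
  let l : StrongDual ℝ (ι → ℝ) :=
    LinearMap.toContinuousLinearMap (-∑ e, c e • LinearMap.proj e)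
  obtain ⟨γ, hγ, hmax⟩ := (Metric.isCompact_of_isClosed_isBounded isClosed_feasibleSet
    hbdd).exists_mem_extremePoints_isMaxOn hne l
  refine ⟨γ, hγ.1, fun γ' hγ' => ?_, card_support_le_of_mem_extremePoints hγ⟩
  simpa [l] using hmax hγ'

end LinearProgram

theorem Fintype.sum_prod_mul_apply {κ R : Type*} {X : κ → Type*} [Fintype κ] [DecidableEq κ]
    [∀ i, Fintype (X i)] [CommSemiring R] (g : ∀ j, X j → R) (hg : ∀ j, ∑ z, g j z = 1)
    (i : κ) (F : X i → R) :
    ∑ x : ∀ j, X j, (∏ j, g j (x j)) * F (x i) = ∑ z, g i z * F z := by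
  have hsplit (x : ∀ j, X j) : (∏ j, g j (x j)) * F (x i) = (fun y => g i y.1 * F y.1 *
      ∏ j : {j // j ≠ i}, g j (y.2 j)) (Equiv.piSplitAt i X x) := by
    simp [Fintype.prod_eq_mul_prod_subtype_ne _ i]; ring
  rw [Fintype.sum_congr _ _ hsplit, (Equiv.piSplitAt i X).sum_comp (fun y => g i y.1 * F y.1 *
      ∏ j : {j // j ≠ i}, g j (y.2 j)), Fintype.sum_prod_type]
  simp_rw [← mul_sum, ← Fintype.prod_sum, hg, prod_const_one, mul_one]

theorem card_option_sigma_ne {κ : Type*} {X : κ → Type*} [Fintype κ] [∀ i, Fintype (X i)]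
    [∀ i, DecidableEq (X i)] (r : ∀ i, X i) :
    Fintype.card (Option (Σ i, {x : X i // x ≠ r i})) =
      ∑ i, Fintype.card (X i) - Fintype.card κ + 1 := by
  have hcard (i : κ) : Fintype.card {x : X i // x ≠ r i} = Fintype.card (X i) - 1 := by
    rw [Fintype.card_subtype_compl, Fintype.card_subtype_eq]
  have hpos (i : κ) : 1 ≤ Fintype.card (X i) := Fintype.card_pos_iff.2 ⟨r i⟩
  simp only [Fintype.card_option, Fintype.card_sigma, hcard]
  rw [sum_tsub_distrib _ fun i _ => hpos i]
  simp

section Glue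

variable {κ Y : Type*} {X : κ → Type*} [Fintype κ] {q : Y → ℝ} {m : ∀ i, Y → X i → ℝ}

/-- Given `y`, the coordinates `x i` are drawn independently from the conditional laws
`m i y · / q y`; this glues the couplings `m i` along their common marginal `q`. -/
noncomputable def glue (q : Y → ℝ) (m : ∀ i, Y → X i → ℝ) (e : Y × (∀ i, X i)) : ℝ :=
  q e.1 * ∏ i, m i e.1 (e.2 i) / q e.1

theorem glue_nonneg (hq0 : 0 ≤ q) (hm0 : ∀ i y x, 0 ≤ m i y x) : 0 ≤ glue q m := fun _ =>
  mul_nonneg (hq0 _) (prod_nonneg fun _ _ => div_nonneg (hm0 _ _ _) (hq0 _))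

variable [DecidableEq κ] [Fintype Y] [∀ i, Fintype (X i)]

theorem sum_glue_mul (hm0 : ∀ i y x, 0 ≤ m i y x) (hrow : ∀ i y, ∑ x, m i y x = q y) (i : κ)
    (f : Y → X i → ℝ) : ∑ e, glue q m e * f e.1 (e.2 i) = ∑ y, ∑ x, m i y x * f y x := by
  rw [Fintype.sum_prod_type]
  refine sum_congr rfl fun y _ => ?_
  by_cases hq : q y = 0
  · have hm (x : X i) : m i y x = 0 :=
      (sum_eq_zero_iff_of_nonneg fun x _ => hm0 i y x).1 ((hrow i y).trans hq) x (mem_univ x)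
    simp [glue, hq, hm]
  · have hcond (j : κ) : ∑ x, m j y x / q y = 1 := by rw [← sum_div, hrow, div_self hq]
    simp_rw [glue, mul_assoc, ← mul_sum, Fintype.sum_prod_mul_apply _ hcond, mul_sum]
    refine sum_congr rfl fun x _ => ?_
    field_simp

theorem sum_glue (hrow : ∀ i y, ∑ x, m i y x = q y) : ∑ e, glue q m e = ∑ y, q y := by
  rw [Fintype.sum_prod_type]
  refine sum_congr rfl fun y _ => ?_
  by_cases hq : q y = 0
  · simp [glue, hq]
  · have hcond (j : κ) : ∑ x, m j y x / q y = 1 := by rw [← sum_div, hrow, div_self hq]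
    simp_rw [glue, ← mul_sum]
    rw [← Fintype.prod_sum fun j x => m j y x / q y]
    simp [hcond]

end Glue

section MultiMarginal

variable {κ Y : Type*} {X : κ → Type*} [Fintype κ] [DecidableEq κ] [Fintype Y]
  [∀ i, Fintype (X i)] [∀ i, DecidableEq (X i)]

def marginal (γ : Y × (∀ i, X i) → ℝ) (i : κ) (x : X i) : ℝ :=
  ∑ e with e.2 i = x, γ e

variable (Y)

def multiCouplings (p : ∀ i, X i → ℝ) : Set (Y × (∀ i, X i) → ℝ) :=
  {γ | 0 ≤ γ ∧ ∑ e, γ e = 1 ∧ ∀ i x, marginal γ i x = p i x}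

/-- The constraints of `multiCouplings` in standard form, without the marginal constraints at the
reference points `r i`: these follow from the others and the total mass. Dropping them is what
brings the number of constraints down to `∑ i, |X i| - |κ| + 1`. -/
def marginalConstraint (r : ∀ i, X i) :
    Option (Σ i, {x : X i // x ≠ r i}) → Y × (∀ i, X i) → ℝ
  | none, _ => 1
  | some ⟨i, x⟩, e => if e.2 i = x then 1 else 0

def marginalTarget (p : ∀ i, X i → ℝ) (r : ∀ i, X i) : Option (Σ i, {x : X i // x ≠ r i}) → ℝ
  | none => 1
  | some ⟨i, x⟩ => p i x

variable {Y} {p : ∀ i, X i → ℝ} {q : Y → ℝ} {m : ∀ i, Y → X i → ℝ}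

theorem sum_marginal (γ : Y × (∀ i, X i) → ℝ) (i : κ) : ∑ x, marginal γ i x = ∑ e, γ e :=
  sum_fiberwise _ _ _

theorem feasibleSet_marginalConstraint (hp : ∀ i, ∑ x, p i x = 1) (r : ∀ i, X i) :
    feasibleSet (marginalConstraint Y r) (marginalTarget p r) = multiCouplings Y p := by
  have hsome (γ : Y × (∀ i, X i) → ℝ) (i : κ) (x : {x // x ≠ r i}) :
      ∑ e, marginalConstraint Y r (some ⟨i, x⟩) e * γ e = marginal γ i x := by
    simp [marginalConstraint, marginal, sum_filter]
  ext γ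
  constructor
  · rintro ⟨hγ0, hγ⟩
    have hmass : ∑ e, γ e = 1 := by simpa [marginalConstraint, marginalTarget] using hγ none
    have hoff (i : κ) (x : {x // x ≠ r i}) : marginal γ i x = p i x := by
      simpa [hsome, marginalTarget] using hγ (some ⟨i, x⟩)
    refine ⟨hγ0, hmass, fun i x => ?_⟩
    obtain rfl | hx := eq_or_ne x (r i)
    · have h := (sum_marginal γ i).trans (hmass.trans (hp i).symm)
      rw [Fintype.sum_eq_add_sum_subtype_ne _ (r i), Fintype.sum_eq_add_sum_subtype_ne _ (r i),
        Fintype.sum_congr _ _ (hoff i)] at h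
      exact add_right_cancel h
    · exact hoff i ⟨x, hx⟩
  · rintro ⟨hγ0, hmass, hmarg⟩
    refine ⟨hγ0, ?_⟩
    rintro (_ | ⟨i, x⟩)
    · simpa [marginalConstraint, marginalTarget] using hmass
    · simpa [hsome, marginalTarget] using hmarg i x

theorem glue_mem_multiCouplings (hq0 : 0 ≤ q) (hq1 : ∑ y, q y = 1)
    (hm0 : ∀ i y x, 0 ≤ m i y x) (hrow : ∀ i y, ∑ x, m i y x = q y)
    (hcol : ∀ i x, ∑ y, m i y x = p i x) : glue q m ∈ multiCouplings Y p := by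
  refine ⟨glue_nonneg hq0 hm0, (sum_glue hrow).trans hq1, fun i x => ?_⟩
  have := sum_glue_mul hm0 hrow i fun _ z => if z = x then 1 else 0
  simp only [mul_ite, mul_one, mul_zero, sum_ite_eq'] at this
  simpa [marginal, sum_filter, hcol] using this

theorem multiCouplings_nonempty [Nonempty Y] (hp0 : ∀ i x, 0 ≤ p i x)
    (hp1 : ∀ i, ∑ x, p i x = 1) : (multiCouplings Y p).Nonempty := by
  classical
  obtain ⟨y₀⟩ := ‹Nonempty Y›
  let q : Y → ℝ := fun y => if y = y₀ then 1 else 0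
  refine ⟨glue q (fun i y x => q y * p i x), glue_mem_multiCouplings ?_ ?_ ?_ ?_ ?_⟩
  · intro y; simp only [q]; split_ifs <;> norm_num
  · simp [q]
  · intro i y x; simp only [q]; split_ifs <;> simp [hp0]
  · simp [← mul_sum, hp1]
  · simp [q]

theorem multiCouplings_subset_Icc : multiCouplings Y p ⊆ Set.Icc 0 1 := fun γ hγ =>
  ⟨hγ.1, fun e => by
    rw [Pi.one_apply, ← hγ.2.1]
    exact single_le_sum (fun e _ => hγ.1 e) (mem_univ e)⟩

theorem exists_sparse_isMinOn_multiCouplings [Nonempty Y] (hp0 : ∀ i x, 0 ≤ p i x)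
    (hp1 : ∀ i, ∑ x, p i x = 1) (c : Y × (∀ i, X i) → ℝ) :
    ∃ γ ∈ multiCouplings Y p, IsMinOn (fun γ => ∑ e, c e * γ e) (multiCouplings Y p) γ ∧
      #{e | γ e ≠ 0} ≤ ∑ i, Fintype.card (X i) - Fintype.card κ + 1 := by
  have (i : κ) : Nonempty (X i) := by
    by_contra h
    rw [not_nonempty_iff] at h
    simpa using hp1 i
  let r : ∀ i, X i := fun i => Classical.arbitrary _
  rw [← feasibleSet_marginalConstraint hp1 r, ← card_option_sigma_ne r]
  refine exists_sparse_isMinOn_feasibleSet ?_ ?_ c <;> rw [feasibleSet_marginalConstraint hp1 r]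
  · exact multiCouplings_nonempty hp0 hp1
  · exact (Metric.isBounded_Icc 0 1).subset multiCouplings_subset_Icc

end MultiMarginal

section DiscreteMeasure

variable {κ α β : Type*} [Fintype κ] [MeasurableSpace α] [MeasurableSpace β]
  {w : κ → ℝ≥0∞} {g : κ → α}

noncomputable def discreteMeasure (w : κ → ℝ≥0∞) (g : κ → α) : Measure α :=
  ∑ e, w e • Measure.dirac (g e)

theorem discreteMeasure_apply {A : Set α} (hA : MeasurableSet A) :
    discreteMeasure w g A = ∑ e, w e * A.indicator 1 (g e) := by
  simp [discreteMeasure, Measure.finsetSum_apply, Measure.dirac_apply' _ hA]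

theorem discreteMeasure_univ : discreteMeasure w g Set.univ = ∑ e, w e := by
  simp [discreteMeasure_apply MeasurableSet.univ]

theorem discreteMeasure_apply_eq_zero {A : Set α} (hA : MeasurableSet A)
    (h : ∀ e, w e ≠ 0 → g e ∉ A) : discreteMeasure w g A = 0 := by
  rw [discreteMeasure_apply hA]
  refine sum_eq_zero fun e _ => ?_
  by_cases he : w e = 0
  · simp [he]
  · simp [h e he]

theorem msupp_discreteMeasure_subset [MeasurableSingletonClass α] :
    msupp (discreteMeasure w g) ⊆ g '' {e | w e ≠ 0} := by
  intro x hx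
  by_contra hxg
  exact hx (discreteMeasure_apply_eq_zero (measurableSet_singleton x)
    fun e he hex => hxg ⟨e, he, hex⟩)

theorem isProbabilityMeasure_discreteMeasure (h : ∑ e, w e = 1) :
    IsProbabilityMeasure (discreteMeasure w g) :=
  ⟨discreteMeasure_univ.trans h⟩

theorem ncard_msupp_discreteMeasure_le [MeasurableSingletonClass α] :
    (msupp (discreteMeasure w g)).ncard ≤ #{e | w e ≠ 0} := by
  refine (Set.ncard_le_ncard msupp_discreteMeasure_subset (Set.toFinite _)).trans ?_
  refine (Set.ncard_image_le (Set.toFinite _)).trans_eq ?_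
  rw [← Set.ncard_coe_finset, coe_filter_univ]

theorem map_discreteMeasure {f : α → β} (hf : Measurable f) :
    (discreteMeasure w g).map f = discreteMeasure w (f ∘ g) := by
  rw [discreteMeasure, ← Measure.mapₗ_apply_of_measurable hf, map_sum]
  simp [Measure.mapₗ_apply_of_measurable hf, Measure.map_dirac' hf, discreteMeasure]

theorem discreteMeasure_comp {κ' : Type*} [Fintype κ'] [DecidableEq κ'] (π : κ → κ')
    (g : κ' → α) :
    discreteMeasure w (g ∘ π) = discreteMeasure (fun x => ∑ e with π e = x, w e) g := by
  simp only [discreteMeasure, sum_smul, Function.comp_apply]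
  exact (sum_fiberwise_of_maps_to (fun e _ => mem_univ (π e)) _).symm
    |>.trans (sum_congr rfl fun x _ => sum_congr rfl fun e he => by rw [(mem_filter.1 he).2])

theorem lintegral_discreteMeasure [MeasurableSingletonClass α] (f : α → ℝ≥0∞) :
    ∫⁻ x, f x ∂discreteMeasure w g = ∑ e, w e * f (g e) := by
  simp [discreteMeasure]

theorem eq_discreteMeasure_of_measure_compl_eq_zero [MeasurableSingletonClass α] {μ : Measure α}
    {T : Finset α} (hT : μ (↑T)ᶜ = 0) :
    μ = discreteMeasure (fun x : T => μ {(x : α)}) Subtype.val := by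
  have hunion : (↑T : Set α) = ⋃ x ∈ T, {x} := by ext; simp
  conv_lhs => rw [← Measure.restrict_eq_self_of_ae_mem (ae_iff.2 hT), hunion,
    Measure.restrict_biUnion_finset (fun x _ y _ hxy => Set.disjoint_singleton.2 hxy)
      fun _ => measurableSet_singleton _]
  simp [discreteMeasure, Measure.sum_fintype, Measure.restrict_singleton]

noncomputable def pointMasses (μ : Measure α) (T : Finset α) (x : T) : ℝ :=
  (μ {(x : α)}).toReal

theorem ofReal_pointMasses {μ : Measure α} [IsFiniteMeasure μ] {T : Finset α} (x : T) :
    ENNReal.ofReal (pointMasses μ T x) = μ {(x : α)} :=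
  ENNReal.ofReal_toReal (measure_ne_top _ _)

theorem sum_pointMasses [MeasurableSingletonClass α] {μ : Measure α} [IsProbabilityMeasure μ]
    {T : Finset α} (hT : μ (↑T)ᶜ = 0) : ∑ x, pointMasses μ T x = 1 := by
  unfold pointMasses
  rw [← ENNReal.toReal_sum fun _ _ => measure_ne_top _ _,
    sum_coe_sort T fun x => μ {x}, sum_measure_singleton,
    (prob_compl_eq_zero_iff T.measurableSet).1 hT, ENNReal.toReal_one]

end DiscreteMeasure

section Coupling

variable {α β : Type*} [MeasurableSpace α] [MeasurableSpace β]

def IsCoupling (π : Measure (α × β)) (μ : Measure α) (ν : Measure β) : Prop :=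
  π.map Prod.fst = μ ∧ π.map Prod.snd = ν

theorem IsCoupling.isFiniteMeasure {π : Measure (α × β)} {μ : Measure α} {ν : Measure β}
    [IsFiniteMeasure μ] (hπ : IsCoupling π μ ν) : IsFiniteMeasure π :=
  ⟨by simpa [← hπ.1, Measure.map_apply measurable_fst MeasurableSet.univ] using
    measure_lt_top μ Set.univ⟩

variable [MeasurableSingletonClass α] [MeasurableSingletonClass β] {π : Measure (α × β)}
  {μ : Measure α} {ν : Measure β}

theorem IsCoupling.sum_measure_singleton_right (hπ : IsCoupling π μ ν) {T : Finset β}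
    (hT : ν (↑T)ᶜ = 0) (y : α) : ∑ x ∈ T, π {(y, x)} = μ {y} := by
  have hT' : π (Prod.snd ⁻¹' ↑T)ᶜ = 0 := by
    rw [← Set.preimage_compl, ← Measure.map_apply measurable_snd T.measurableSet.compl, hπ.2, hT]
  rw [← hπ.1, Measure.map_apply measurable_fst (measurableSet_singleton y),
    ← measure_inter_conull hT', ← Set.prod_eq, ← Finset.coe_singleton, ← Finset.coe_product,
    ← sum_measure_singleton, Finset.sum_product, Finset.sum_singleton]

theorem IsCoupling.sum_measure_singleton_left (hπ : IsCoupling π μ ν) {S : Finset α}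
    (hS : μ (↑S)ᶜ = 0) (x : β) : ∑ y ∈ S, π {(y, x)} = ν {x} := by
  have hS' : π (Prod.fst ⁻¹' ↑S)ᶜ = 0 := by
    rw [← Set.preimage_compl, ← Measure.map_apply measurable_fst S.measurableSet.compl, hπ.1, hS]
  rw [← hπ.2, Measure.map_apply measurable_snd (measurableSet_singleton x),
    ← measure_inter_conull hS', Set.inter_comm, ← Set.prod_eq, ← Finset.coe_singleton,
    ← Finset.coe_product, ← sum_measure_singleton, Finset.sum_product_right,
    Finset.sum_singleton]

theorem ofReal_sum_sum_toReal_mul_le (π : Measure (α × β)) [IsFiniteMeasure π] (S : Finset α)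
    (T : Finset β) {f : α → β → ℝ} (hf : ∀ y x, 0 ≤ f y x) :
    ENNReal.ofReal (∑ y ∈ S, ∑ x ∈ T, (π {(y, x)}).toReal * f y x) ≤
      ∫⁻ z, ENNReal.ofReal (f z.1 z.2) ∂π := by
  rw [← sum_product', ENNReal.ofReal_sum_of_nonneg fun z _ => mul_nonneg toReal_nonneg (hf _ _)]
  simp_rw [ENNReal.ofReal_mul toReal_nonneg, ENNReal.ofReal_toReal (measure_ne_top _ _),
    mul_comm (π _)]
  exact (lintegral_finset _ _).symm.trans_le (setLIntegral_le_lintegral _ _)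

end Coupling

section Wasserstein

variable {d N : ℕ}

theorem W2sq_le_lintegral {P Q : Measure (Pt d)} {π : Measure (Pt d × Pt d)}
    (hπ : IsCoupling π P Q) : W2sq P Q ≤ ∫⁻ z, ENNReal.ofReal (‖z.1 - z.2‖ ^ 2) ∂π :=
  biInf_le _ hπ

theorem exists_isCoupling_lintegral_lt {P Q : Measure (Pt d)} {a : ℝ≥0∞} (h : W2sq P Q < a) :
    ∃ π, IsCoupling π P Q ∧ ∫⁻ z, ENNReal.ofReal (‖z.1 - z.2‖ ^ 2) ∂π < a := by
  simpa only [W2sq, iInf_lt_iff, exists_prop, IsCoupling, Set.mem_ofPred_eq] using h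

theorem le_phi_of_forall_isCoupling {l : Fin N → ℝ} {Pm : Fin N → Measure (Pt d)}
    {Q : Measure (Pt d)} {a : ℝ≥0∞} (hl : ∀ i, 0 < l i) (hsum : ∑ i, l i = 1)
    (h : ∀ π : Fin N → Measure (Pt d × Pt d), (∀ i, IsCoupling (π i) Q (Pm i)) →
      a ≤ ∑ i, ENNReal.ofReal (l i) * ∫⁻ z, ENNReal.ofReal (‖z.1 - z.2‖ ^ 2) ∂π i) :
    a ≤ phi l Pm Q := by
  refine ENNReal.le_of_forall_pos_le_add fun ε hε hlt => ?_
  have hfin (i : Fin N) : W2sq Q (Pm i) ≠ ⊤ := by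
    have := (single_le_sum (fun j _ => zero_le) (mem_univ i)).trans_lt hlt
    exact (ENNReal.lt_top_of_mul_ne_top_right this.ne (by simpa using hl i)).ne
  choose π hπ hπε using fun i =>
    exists_isCoupling_lintegral_lt (ENNReal.lt_add_right (hfin i) (ENNReal.coe_ne_zero.2 hε.ne'))
  calc a ≤ ∑ i, ENNReal.ofReal (l i) * ∫⁻ z, ENNReal.ofReal (‖z.1 - z.2‖ ^ 2) ∂π i := h π hπ
    _ ≤ ∑ i, ENNReal.ofReal (l i) * (W2sq Q (Pm i) + ε) :=
      sum_le_sum fun i _ => mul_le_mul_right (hπε i).le _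
    _ = phi l Pm Q + ε := by
      simp_rw [mul_add, sum_add_distrib, ← sum_mul, ← ENNReal.ofReal_sum_of_nonneg
        (fun i _ => (hl i).le), hsum, ENNReal.ofReal_one, one_mul, phi]

end Wasserstein

section Barycenter

variable {d N : ℕ} {s : Finset (Pt d)} {t : Fin N → Finset (Pt d)} {l : Fin N → ℝ}
  {Pm : Fin N → Measure (Pt d)} {γ : s × (∀ i, t i) → ℝ}

noncomputable def barycenterCost (l : Fin N → ℝ) (e : s × ∀ i, t i) : ℝ :=
  ∑ i, l i * ‖(e.1 : Pt d) - e.2 i‖ ^ 2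

theorem ofReal_sum_barycenterCost_mul (hl : ∀ i, 0 ≤ l i) (hγ : 0 ≤ γ) :
    ENNReal.ofReal (∑ e, barycenterCost l e * γ e) =
      ∑ i, ENNReal.ofReal (l i) * ENNReal.ofReal (∑ e, γ e * ‖(e.1 : Pt d) - e.2 i‖ ^ 2) := by
  have hnonneg (i : Fin N) : 0 ≤ ∑ e, γ e * ‖(e.1 : Pt d) - e.2 i‖ ^ 2 :=
    sum_nonneg fun e _ => mul_nonneg (hγ e) (sq_nonneg _)
  simp_rw [← ENNReal.ofReal_mul (hl _), ← ENNReal.ofReal_sum_of_nonneg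
    fun i _ => mul_nonneg (hl i) (hnonneg i), barycenterCost, sum_mul, mul_sum]
  rw [sum_comm]
  congr! 3
  ring

theorem discreteMeasure_coord_eq [∀ i, IsFiniteMeasure (Pm i)] (ht : ∀ i, Pm i (↑(t i))ᶜ = 0)
    (hγ : γ ∈ multiCouplings s fun i => pointMasses (Pm i) (t i)) (i : Fin N) :
    discreteMeasure (ENNReal.ofReal ∘ γ) (fun e => (e.2 i : Pt d)) = Pm i := by
  have hfiber (x : t i) : ∑ e with e.2 i = x, ENNReal.ofReal (γ e) = Pm i {(x : Pt d)} := by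
    rw [← ENNReal.ofReal_sum_of_nonneg fun e _ => hγ.1 e, ← ofReal_pointMasses x]
    exact congrArg ENNReal.ofReal (hγ.2.2 i x)
  change discreteMeasure (ENNReal.ofReal ∘ γ) (Subtype.val ∘ fun e => e.2 i) = _
  rw [discreteMeasure_comp]
  simp only [Function.comp_apply, hfiber]
  exact (eq_discreteMeasure_of_measure_compl_eq_zero (ht i)).symm

theorem phi_discreteMeasure_le (hl : ∀ i, 0 ≤ l i) [∀ i, IsFiniteMeasure (Pm i)]
    (ht : ∀ i, Pm i (↑(t i))ᶜ = 0) (hγ : γ ∈ multiCouplings s fun i => pointMasses (Pm i) (t i)) :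
    phi l Pm (discreteMeasure (ENNReal.ofReal ∘ γ) fun e => (e.1 : Pt d)) ≤
      ENNReal.ofReal (∑ e, barycenterCost l e * γ e) := by
  rw [ofReal_sum_barycenterCost_mul hl hγ.1, phi]
  refine sum_le_sum fun i _ => mul_le_mul_right ?_ _
  let π := discreteMeasure (ENNReal.ofReal ∘ γ) fun e => ((e.1 : Pt d), (e.2 i : Pt d))
  have hπ : IsCoupling π (discreteMeasure (ENNReal.ofReal ∘ γ) fun e => (e.1 : Pt d)) (Pm i) :=
    ⟨map_discreteMeasure measurable_fst,
      (map_discreteMeasure measurable_snd).trans (discreteMeasure_coord_eq ht hγ i)⟩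
  refine (W2sq_le_lintegral hπ).trans_eq ?_
  rw [lintegral_discreteMeasure, ENNReal.ofReal_sum_of_nonneg
    fun e _ => mul_nonneg (hγ.1 e) (sq_nonneg _)]
  simp [ENNReal.ofReal_mul (hγ.1 _)]

theorem ofReal_sum_barycenterCost_mul_le_of_isMinOn (hl : ∀ i, 0 ≤ l i) {Q : Measure (Pt d)}
    [IsProbabilityMeasure Q] (hQ : Q (↑s)ᶜ = 0) (ht : ∀ i, Pm i (↑(t i))ᶜ = 0)
    (hmin : IsMinOn (fun γ => ∑ e, barycenterCost l e * γ e)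
      (multiCouplings s fun i => pointMasses (Pm i) (t i)) γ)
    {π : Fin N → Measure (Pt d × Pt d)} (hπ : ∀ i, IsCoupling (π i) Q (Pm i)) :
    ENNReal.ofReal (∑ e, barycenterCost l e * γ e) ≤
      ∑ i, ENNReal.ofReal (l i) * ∫⁻ z, ENNReal.ofReal (‖z.1 - z.2‖ ^ 2) ∂π i := by
  have := fun i => (hπ i).isFiniteMeasure
  let m : ∀ i, s → t i → ℝ := fun i y x => (π i {((y : Pt d), (x : Pt d))}).toReal
  have hrow (i : Fin N) (y : s) : ∑ x, m i y x = pointMasses Q s y := by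
    rw [← ENNReal.toReal_sum fun _ _ => measure_ne_top _ _,
      sum_coe_sort (t i) fun x => π i {((y : Pt d), x)},
      (hπ i).sum_measure_singleton_right (ht i), pointMasses]
  have hcol (i : Fin N) (x : t i) : ∑ y, m i y x = pointMasses (Pm i) (t i) x := by
    rw [← ENNReal.toReal_sum fun _ _ => measure_ne_top _ _,
      sum_coe_sort s fun y => π i {(y, (x : Pt d))},
      (hπ i).sum_measure_singleton_left hQ, pointMasses]
  have hm0 (i : Fin N) (y : s) (x : t i) : 0 ≤ m i y x := toReal_nonneg
  have hglue := glue_mem_multiCouplings (fun _ => toReal_nonneg) (sum_pointMasses hQ) hm0 hrow hcol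
  calc ENNReal.ofReal (∑ e, barycenterCost l e * γ e)
      ≤ ENNReal.ofReal (∑ e, barycenterCost l e * glue (pointMasses Q s) m e) :=
        ENNReal.ofReal_le_ofReal (hmin hglue)
    _ = _ := ofReal_sum_barycenterCost_mul hl hglue.1
    _ ≤ _ := sum_le_sum fun i _ => mul_le_mul_right ?_ _
  rw [sum_glue_mul hm0 hrow i fun y x => ‖(y : Pt d) - x‖ ^ 2,
    sum_coe_sort s fun y => ∑ x : t i, (π i {(y, (x : Pt d))}).toReal * ‖y - x‖ ^ 2]
  rw [sum_congr rfl fun y _ => sum_coe_sort (t i) fun x => (π i {(y, x)}).toReal * ‖y - x‖ ^ 2]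
  exact ofReal_sum_sum_toReal_mul_le (π i) s (t i) fun y x => sq_nonneg ‖y - x‖

end Barycenter

/-- for any nonempty finite candidate support set S₀ there exists
a sparse approximate barycenter in S₀, i.e. a minimizer of φ among probability
measures supported in S₀ with at most `∑ i, |P i| - N + 1` support points. -/
theorem exists_sparse_approx_barycenter {d N : ℕ}
    (l : Fin N → ℝ) (Pm : Fin N → Measure (Pt d))
    (hl : ∀ i, 0 < l i) (hsum : ∑ i, l i = 1)
    (hprob : ∀ i, IsProbabilityMeasure (Pm i))
    (hfin : ∀ i, FinitelySupported (Pm i))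
    (S₀ : Set (Pt d)) (hS₀fin : S₀.Finite) (hS₀ne : S₀.Nonempty) :
    ∃ P₀ : Measure (Pt d), IsProbabilityMeasure P₀ ∧ P₀ S₀ᶜ = 0 ∧
      (∀ Q : Measure (Pt d), IsProbabilityMeasure Q → Q S₀ᶜ = 0 →
        phi l Pm P₀ ≤ phi l Pm Q) ∧
      (msupp P₀).ncard ≤ (∑ i, (msupp (Pm i)).ncard) - N + 1 := by
  obtain ⟨s, rfl⟩ := hS₀fin.exists_finset_coe
  choose t ht using fun i => (hfin i).1.exists_finset_coe
  have htnull (i : Fin N) : Pm i (↑(t i))ᶜ = 0 := ht i ▸ (hfin i).2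
  have : Nonempty s := hS₀ne.to_subtype
  obtain ⟨γ, hγ, hmin, hsparse⟩ := exists_sparse_isMinOn_multiCouplings (Y := s)
    (fun _ _ => toReal_nonneg) (fun i => sum_pointMasses (htnull i)) (barycenterCost l)
  refine ⟨discreteMeasure (ENNReal.ofReal ∘ γ) fun e => (e.1 : Pt d),
    isProbabilityMeasure_discreteMeasure ?_, discreteMeasure_apply_eq_zero
      s.measurableSet.compl fun e _ he => he e.1.2, fun Q hQ hQs => ?_, ?_⟩
  · simp [← ENNReal.ofReal_sum_of_nonneg fun e _ => hγ.1 e, hγ.2.1]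
  · exact (phi_discreteMeasure_le (fun i => (hl i).le) htnull hγ).trans
      (le_phi_of_forall_isCoupling hl hsum fun π hπ =>
        ofReal_sum_barycenterCost_mul_le_of_isMinOn (fun i => (hl i).le) hQs htnull hmin hπ)
  · refine ncard_msupp_discreteMeasure_le.trans ((card_le_card ?_).trans (hsparse.trans_eq ?_))
    · exact monotone_filter_right _ fun e _ hw h => hw (by simp [h])
    · simp [← ht, Set.ncard_coe_finset]
end
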